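/- For |q|<1, the ₀φ₁ series with lower parameter −q satisfies ₀φ₁(−; −q; q, x) = (−x; q²)_∞, i.e., Σ_{j≥0} q^{j(j−1)} x^j / ((q;q)_j (−q;q)_j) = ∏_{j≥0}(1 + x q^{2j}). -/

import Mathlib

open scoped BigOperators

/-- q-shifted factorial (a;q)_j -/
noncomputable def qPoch (a q : ℂ) (j : ℕ) : ℂ :=
  ∏ i ∈ Finset.range j, (1 - a * q ^ i)

/-- infinite q-shifted factorial (a;q)_∞ -/
noncomputable def qPochInf (a q : ℂ) : ℂ :=
  ∏' j : ℕ, (1 - a * q ^ j)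

/-- basic hypergeometric series ₁φ₁(a; c; q, x) -/
noncomputable def phi11 (a c q x : ℂ) : ℂ :=
  ∑' j : ℕ, qPoch a q j / (qPoch q q j * qPoch c q j) *
    (-1) ^ j * q ^ (j * (j - 1) / 2) * x ^ j

/-- basic hypergeometric series ₀φ₁(–; c; q, x) -/
noncomputable def phi01 (c q x : ℂ) : ℂ :=
  ∑' j : ℕ, q ^ (j * (j - 1)) * x ^ j / (qPoch q q j * qPoch c q j)

/-- basic hypergeometric series ₂φ₁(a, b; c; q, x) -/
noncomputable def phi21 (a b c q x : ℂ) : ℂ :=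
  ∑' j : ℕ, qPoch a q j * qPoch b q j / (qPoch q q j * qPoch c q j) * x ^ j

/-!
Since `(q;q)_j (-q;q)_j = (q²;q²)_j` and `j (j - 1) = 2 · C(j, 2)`, the series is Euler's series
`∑ t^C(j,2) x^j / (t;t)_j` at `t = q²`, which equals `(-x;t)_∞`. Euler's identity is the limit
`n → ∞` of the finite `t`-binomial theorem `∏_{i<n} (1 + x t^i) = ∑_j t^C(j,2) [n, j]_t x^j`, taken
termwise by Tannery's theorem: the coefficients are dominated by `‖t‖^C(j,2) (2 / (1 - ‖t‖))^j`,
which stays summable against any `‖x‖^j`.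
-/

open Filter Finset Topology

theorem qPoch_succ (a q : ℂ) (j : ℕ) : qPoch a q (j + 1) = qPoch a q j * (1 - a * q ^ j) :=
  prod_range_succ _ _

theorem qPoch_self (t : ℂ) (j : ℕ) : qPoch t t j = ∏ i ∈ range j, (1 - t ^ (i + 1)) := by
  simp only [qPoch, pow_succ']

theorem qPoch_mul_qPoch_neg (a q : ℂ) (j : ℕ) :
    qPoch a q j * qPoch (-a) q j = qPoch (a ^ 2) (q ^ 2) j := by
  simp only [qPoch, ← prod_mul_distrib]
  exact prod_congr rfl fun i _ ↦ by rw [pow_right_comm]; ring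

theorem one_sub_norm_pow_le_norm_qPoch_self {t : ℂ} (ht : ‖t‖ ≤ 1) (j : ℕ) :
    (1 - ‖t‖) ^ j ≤ ‖qPoch t t j‖ := by
  have hfactor (i : ℕ) : 1 - ‖t‖ ≤ ‖1 - t ^ (i + 1)‖ :=
    calc 1 - ‖t‖ ≤ ‖(1 : ℂ)‖ - ‖t ^ (i + 1)‖ := by
          rw [norm_one, norm_pow]
          linarith [pow_le_of_le_one (norm_nonneg t) ht i.add_one_ne_zero]
      _ ≤ ‖1 - t ^ (i + 1)‖ := norm_sub_norm_le _ _
  have := prod_le_prod (s := range j) (fun _ _ ↦ sub_nonneg.mpr ht) fun i _ ↦ hfactor i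
  rwa [prod_const, card_range, ← norm_prod, ← qPoch_self] at this

theorem qPoch_self_ne_zero {t : ℂ} (ht : ‖t‖ < 1) (j : ℕ) : qPoch t t j ≠ 0 :=
  norm_pos_iff.mp <|
    (pow_pos (by linarith) j).trans_le (one_sub_norm_pow_le_norm_qPoch_self ht.le j)

/-- `t ^ (j choose 2)` times the Gaussian binomial coefficient `[n, j]_t`. The numerator factor
`k = n` is `1 - t ^ 0 = 0`, so it vanishes for `j > n`. -/
noncomputable def eulerCoeff (t : ℂ) (n j : ℕ) : ℂ :=
  t ^ j.choose 2 * (∏ k ∈ range j, (1 - t ^ (n - k))) / qPoch t t j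

section EulerCoeff

variable {t : ℂ}

theorem eulerCoeff_zero_right (n : ℕ) : eulerCoeff t n 0 = 1 := by
  simp [eulerCoeff, qPoch]

theorem prod_one_sub_pow_sub_eq_zero {n j : ℕ} (h : n < j) :
    ∏ k ∈ range j, (1 - t ^ (n - k)) = 0 :=
  prod_eq_zero (mem_range.mpr h) (by simp)

theorem eulerCoeff_eq_zero_of_lt {n j : ℕ} (h : n < j) : eulerCoeff t n j = 0 := by
  simp [eulerCoeff, prod_one_sub_pow_sub_eq_zero h]

theorem eulerCoeff_succ_succ {n m : ℕ} (hm : qPoch t t (m + 1) ≠ 0) :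
    eulerCoeff t (n + 1) (m + 1) = eulerCoeff t n (m + 1) + t ^ n * eulerCoeff t n m := by
  have hPm : qPoch t t m ≠ 0 := by rw [qPoch_succ] at hm; exact left_ne_zero_of_mul hm
  have hfm : 1 - t ^ (m + 1) ≠ 0 := by
    rw [qPoch_succ, ← pow_succ'] at hm; exact right_ne_zero_of_mul hm
  have hnum_succ : ∏ k ∈ range (m + 1), (1 - t ^ (n + 1 - k))
      = (∏ k ∈ range m, (1 - t ^ (n - k))) * (1 - t ^ (n + 1)) := by
    simp [prod_range_succ']
  have hchoose : (m + 1).choose 2 = m.choose 2 + m := by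
    rw [Nat.choose_succ_succ', Nat.choose_one_right, add_comm]
  simp only [eulerCoeff, hnum_succ, prod_range_succ _ m, qPoch_succ, ← pow_succ', hchoose]
  rcases le_or_gt m n with hmn | hnm
  · obtain ⟨d, rfl⟩ := Nat.exists_eq_add_of_le hmn
    rw [Nat.add_sub_cancel_left]
    field_simp
    ring
  · simp [prod_one_sub_pow_sub_eq_zero hnm]

/-- Cauchy's finite `t`-binomial theorem. -/
theorem prod_one_add_mul_pow_eq_sum_eulerCoeff (ht : ∀ j, qPoch t t j ≠ 0) (x : ℂ) (n : ℕ) :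
    ∏ i ∈ range n, (1 + x * t ^ i) = ∑ j ∈ range (n + 1), eulerCoeff t n j * x ^ j := by
  induction n with
  | zero => simp [eulerCoeff_zero_right]
  | succ n ih =>
    have hpascal (m : ℕ) : eulerCoeff t (n + 1) (m + 1) * x ^ (m + 1)
        = eulerCoeff t n (m + 1) * x ^ (m + 1) + t ^ n * x * (eulerCoeff t n m * x ^ m) := by
      rw [eulerCoeff_succ_succ (ht _)]
      ring
    have hshift : ∑ m ∈ range (n + 1), eulerCoeff t n (m + 1) * x ^ (m + 1) + 1
        = ∑ j ∈ range (n + 1), eulerCoeff t n j * x ^ j := by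
      have := sum_range_succ' (fun j ↦ eulerCoeff t n j * x ^ j) (n + 1)
      rw [sum_range_succ, eulerCoeff_eq_zero_of_lt n.lt_succ_self, eulerCoeff_zero_right] at this
      simpa using this.symm
    rw [prod_range_succ, ih, sum_range_succ' (fun j ↦ eulerCoeff t (n + 1) j * x ^ j),
      eulerCoeff_zero_right, sum_congr rfl fun m _ ↦ hpascal m, sum_add_distrib, ← mul_sum,
      ← hshift]
    ring

theorem tendsto_eulerCoeff (ht : ‖t‖ < 1) (j : ℕ) :
    Tendsto (fun n ↦ eulerCoeff t n j) atTop (𝓝 (t ^ j.choose 2 / qPoch t t j)) := by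
  have hnum : Tendsto (fun n ↦ ∏ k ∈ range j, (1 - t ^ (n - k))) atTop
      (𝓝 (∏ _k ∈ range j, 1)) :=
    tendsto_finsetProd _ fun k _ ↦ by
      simpa using tendsto_const_nhds.sub
        ((tendsto_pow_atTop_nhds_zero_of_norm_lt_one ht).comp (tendsto_sub_atTop_nat k))
  rw [prod_const_one] at hnum
  simpa [eulerCoeff] using (tendsto_const_nhds.mul hnum).div_const (qPoch t t j)

theorem norm_eulerCoeff_le (ht : ‖t‖ < 1) (n j : ℕ) :
    ‖eulerCoeff t n j‖ ≤ ‖t‖ ^ j.choose 2 * (2 / (1 - ‖t‖)) ^ j := by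
  have hnum : ‖∏ k ∈ range j, (1 - t ^ (n - k))‖ ≤ 2 ^ j := by
    have hfactor (k : ℕ) : ‖1 - t ^ (n - k)‖ ≤ 2 :=
      calc ‖1 - t ^ (n - k)‖ ≤ ‖(1 : ℂ)‖ + ‖t ^ (n - k)‖ := norm_sub_le _ _
        _ ≤ 2 := by
          rw [norm_one, norm_pow]
          linarith [pow_le_one₀ (norm_nonneg t) ht.le (n := n - k)]
    have := prod_le_prod (s := range j) (fun _ _ ↦ norm_nonneg _) fun k _ ↦ hfactor k
    rwa [prod_const, card_range, ← norm_prod] at this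
  rw [eulerCoeff, norm_div, norm_mul, norm_pow, div_pow, ← mul_div_assoc]
  exact div_le_div₀ (by positivity) (mul_le_mul_of_nonneg_left hnum (by positivity))
    (pow_pos (by linarith) j) (one_sub_norm_pow_le_norm_qPoch_self ht.le j)

end EulerCoeff

theorem summable_pow_choose_two_mul_pow {𝕜 : Type*} [NormedField 𝕜] [CompleteSpace 𝕜] {r : 𝕜}
    (hr : ‖r‖ < 1) (c : 𝕜) : Summable fun j : ℕ ↦ r ^ j.choose 2 * c ^ j := by
  refine summable_of_ratio_norm_eventually_le (one_half_lt_one (α := ℝ)) ?_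
  have hratio : Tendsto (fun j : ℕ ↦ ‖r‖ ^ j * ‖c‖) atTop (𝓝 0) := by
    simpa using (tendsto_pow_atTop_nhds_zero_of_lt_one (norm_nonneg r) hr).mul_const ‖c‖
  filter_upwards [hratio.eventually_le_const one_half_pos] with j hj
  calc ‖r ^ (j + 1).choose 2 * c ^ (j + 1)‖ = (‖r‖ ^ j * ‖c‖) * ‖r ^ j.choose 2 * c ^ j‖ := by
        simp only [Nat.choose_succ_succ' j 1, Nat.choose_one_right, norm_mul, norm_pow]
        ring
    _ ≤ 1 / 2 * ‖r ^ j.choose 2 * c ^ j‖ := mul_le_mul_of_nonneg_right hj (norm_nonneg _)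

theorem multipliable_one_add_mul_pow {t : ℂ} (ht : ‖t‖ < 1) (x : ℂ) :
    Multipliable fun i : ℕ ↦ 1 + x * t ^ i :=
  multipliable_one_add_of_summable <| by
    simpa [norm_mul, norm_pow] using (summable_geometric_of_lt_one (norm_nonneg t) ht).mul_left ‖x‖

/-- Euler's identity `∑ t^(j choose 2) x^j / (t;t)_j = (-x;t)_∞`. -/
theorem tsum_pow_choose_two_mul_pow_div_qPoch_self {t : ℂ} (ht : ‖t‖ < 1) (x : ℂ) :
    ∑' j : ℕ, t ^ j.choose 2 * x ^ j / qPoch t t j = ∏' i : ℕ, (1 + x * t ^ i) := by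
  have hfinite (n : ℕ) : ∑' j : ℕ, eulerCoeff t n j * x ^ j = ∏ i ∈ range n, (1 + x * t ^ i) := by
    rw [prod_one_add_mul_pow_eq_sum_eulerCoeff (qPoch_self_ne_zero ht)]
    exact tsum_eq_sum fun j hj ↦ by
      rw [eulerCoeff_eq_zero_of_lt (by simpa using hj), zero_mul]
  have hbound (n j : ℕ) :
      ‖eulerCoeff t n j * x ^ j‖ ≤ ‖t‖ ^ j.choose 2 * (2 / (1 - ‖t‖) * ‖x‖) ^ j := by
    rw [norm_mul, norm_pow, mul_pow, ← mul_assoc]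
    exact mul_le_mul_of_nonneg_right (norm_eulerCoeff_le ht n j) (by positivity)
  have hlim := tendsto_tsum_of_dominated_convergence
    (summable_pow_choose_two_mul_pow (r := ‖t‖) (by simpa using ht) _)
    (fun j ↦ (tendsto_eulerCoeff ht j).mul_const (x ^ j)) (.of_forall hbound)
  simp only [hfinite, div_mul_eq_mul_div] at hlim
  exact tendsto_nhds_unique hlim (multipliable_one_add_mul_pow ht x).tendsto_prod_tprod_nat

theorem phi01_eval_at_neg_q (q x : ℂ) (hq : ‖q‖ < 1) :
    phi01 (-q) q x = qPochInf (-x) (q ^ 2) := by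
  have hq2 : ‖q ^ 2‖ < 1 := by
    rw [norm_pow]
    exact pow_lt_one₀ (norm_nonneg q) hq two_ne_zero
  have hterm (j : ℕ) : q ^ (j * (j - 1)) * x ^ j / (qPoch q q j * qPoch (-q) q j)
      = (q ^ 2) ^ j.choose 2 * x ^ j / qPoch (q ^ 2) (q ^ 2) j := by
    rw [qPoch_mul_qPoch_neg, ← pow_mul, Nat.choose_two_right,
      Nat.mul_div_cancel' (Nat.even_mul_pred_self j).two_dvd]
  simp only [phi01, qPochInf, hterm, tsum_pow_choose_two_mul_pow_div_qPoch_self hq2, neg_mul,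
    sub_neg_eq_add]
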